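/- arXiv:1602.05703 — 4 statements merged into one kernel-verified Lean document; each statement's English description precedes it below -/
import Mathlib

section
/- Let B and D be orthogonal projections on ℂ^N. There exists a nonzero vector x with Bx = x and Dx = x if and only if ‖BD‖ = 1, where ‖·‖ is the spectral norm. -/
open Matrix
open scoped Matrix.Norms.L2Operator

/-!
Star projections are contractions, and a star projection fixes exactly the vectors whose norm it
preserves. Hence `‖BD‖ ≤ 1`; in finite dimension the operator norm is attained on the compact unit ball, so
`‖BD‖ = 1` gives `x` with `1 = ‖BDx‖ ≤ ‖Dx‖ ≤ ‖x‖ ≤ 1`, which forces `Dx = x` and then `Bx = x`.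
-/

theorem ContinuousLinearMap.exists_norm_le_one_norm_apply_eq_opNorm {𝕜 E F : Type*} [RCLike 𝕜]
    [NormedAddCommGroup E] [NormedSpace 𝕜 E] [ProperSpace E]
    [SeminormedAddCommGroup F] [NormedSpace 𝕜 F] (T : E →L[𝕜] F) :
    ∃ x, ‖x‖ ≤ 1 ∧ ‖T x‖ = ‖T‖ := by
  obtain ⟨x, hx, hmax⟩ := (isCompact_closedBall (0 : E) 1).exists_isMaxOn
    (Metric.nonempty_closedBall.mpr zero_le_one) T.continuous.norm.continuousOn
  rw [mem_closedBall_zero_iff] at hx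
  refine ⟨x, hx, le_antisymm (T.le_opNorm_of_le hx |>.trans_eq (mul_one _)) ?_⟩
  exact T.opNorm_le_of_unit_norm (norm_nonneg _) fun y hy ↦
    hmax (mem_closedBall_zero_iff.mpr hy.le)

variable {𝕜 E : Type*} [RCLike 𝕜] [NormedAddCommGroup E] [InnerProductSpace 𝕜 E]

namespace IsStarProjection

variable [CompleteSpace E] {p : E →L[𝕜] E}

theorem norm_apply_le (hp : IsStarProjection p) (x : E) : ‖p x‖ ≤ ‖x‖ := by
  obtain ⟨K, _, rfl⟩ := isStarProjection_iff_eq_starProjection.mp hp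
  exact K.norm_starProjection_apply_le x

theorem apply_eq_self_iff_norm_eq (hp : IsStarProjection p) {x : E} :
    p x = x ↔ ‖p x‖ = ‖x‖ := by
  obtain ⟨K, _, rfl⟩ := isStarProjection_iff_eq_starProjection.mp hp
  rw [Submodule.starProjection_eq_self_iff, Submodule.mem_iff_norm_starProjection]

end IsStarProjection

theorem ContinuousLinearMap.exists_apply_eq_self_iff_norm_mul_eq_one [ProperSpace E]
    {p q : E →L[𝕜] E} (hp : IsStarProjection p) (hq : IsStarProjection q) :
    (∃ x, x ≠ 0 ∧ p x = x ∧ q x = x) ↔ ‖p * q‖ = 1 := by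
  constructor
  · rintro ⟨x, hx, hpx, hqx⟩
    have hfix : (p * q) x = x := by rw [mul_apply_eq_comp, hqx, hpx]
    refine le_antisymm ?_ ?_
    · exact (norm_mul_le p q).trans (mul_le_one₀ hp.norm_le (norm_nonneg q) hq.norm_le)
    · simpa [hfix, div_self (norm_ne_zero_iff.mpr hx)] using (p * q).ratio_le_opNorm x
  · intro hnorm
    obtain ⟨x, hx, hpqx⟩ := (p * q).exists_norm_le_one_norm_apply_eq_opNorm
    rw [hnorm, mul_apply_eq_comp] at hpqx
    have hp_le := hp.norm_apply_le (q x)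
    have hq_le := hq.norm_apply_le x
    have hqx : q x = x := hq.apply_eq_self_iff_norm_eq.mpr (by linarith)
    refine ⟨x, norm_ne_zero_iff.mp (by linarith), ?_, hqx⟩
    rw [hp.apply_eq_self_iff_norm_eq, ← hqx]
    linarith

/-- For orthogonal projections `B`, `D` on `ℂ^N`, there is a nonzero `x`
with `Bx = x` and `Dx = x` iff the spectral norm of `B * D` equals one. -/
theorem perfectly_localized_iff_opNorm_eq_one {N : ℕ}
    (B D : Matrix (Fin N) (Fin N) ℂ)
    (hBidem : B * B = B) (hBherm : Bᴴ = B)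
    (hDidem : D * D = D) (hDherm : Dᴴ = D) :
    (∃ x : Fin N → ℂ, x ≠ 0 ∧ B *ᵥ x = x ∧ D *ᵥ x = x) ↔ ‖B * D‖ = 1 := by
  have hB : IsStarProjection (toEuclideanCLM (𝕜 := ℂ) B) := IsStarProjection.map ⟨hBidem, hBherm⟩ _
  have hD : IsStarProjection (toEuclideanCLM (𝕜 := ℂ) D) := IsStarProjection.map ⟨hDidem, hDherm⟩ _
  rw [cstar_norm_def, map_mul, ← ContinuousLinearMap.exists_apply_eq_self_iff_norm_mul_eq_one hB hD]
  exact (WithLp.equiv 2 _).symm.exists_congr fun x ↦ by simp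
end

section
/- Let B and D be orthogonal projections on ℂ^N with D̄ = I − D. If ‖D̄ B‖ < 1, then any vector x₀ with B x₀ = x₀ is uniquely determined among band-limited vectors by its samples D x₀; that is, if B x₀ = x₀, B x₁ = x₁ and D x₀ = D x₁, then x₀ = x₁. -/
open Matrix
open scoped Matrix.Norms.L2Operator

namespace Matrix

variable {𝕜 n : Type*} [RCLike 𝕜] [Fintype n] [DecidableEq n]

theorem eq_zero_of_mulVec_eq_self_of_l2_opNorm_lt_one {A : Matrix n n 𝕜} (hA : ‖A‖ < 1)
    {v : n → 𝕜} (hv : A *ᵥ v = v) : v = 0 := by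
  set e : EuclideanSpace 𝕜 n := WithLp.toLp 2 v
  have hle : ‖e‖ ≤ ‖A‖ * ‖e‖ := by simpa [e, hv] using l2_opNorm_mulVec A e
  have he : ‖e‖ = 0 := by nlinarith [norm_nonneg e]
  simpa [e] using he

end Matrix

theorem bandlimited_unique_of_samples_general {N : ℕ}
    (B D : Matrix (Fin N) (Fin N) ℂ)
    (h : ‖(1 - D) * B‖ < 1) :
    ∀ x₀ x₁ : Fin N → ℂ, B *ᵥ x₀ = x₀ → B *ᵥ x₁ = x₁ → D *ᵥ x₀ = D *ᵥ x₁ →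
      x₀ = x₁ := by
  intro x₀ x₁ h₀ h₁ hD
  rw [← sub_eq_zero]
  -- `x₀ - x₁` is band-limited with vanishing samples, hence fixed by `(1 - D) * B`.
  refine eq_zero_of_mulVec_eq_self_of_l2_opNorm_lt_one h ?_
  rw [← mulVec_mulVec, mulVec_sub, h₀, h₁, sub_mulVec, one_mulVec, mulVec_sub, hD, sub_self,
    sub_zero]

/-- For orthogonal projections `B`, `D` on `ℂ^N` with `D̄ = I - D`,
if `‖(I - D) * B‖ < 1`, then band-limited vectors are uniquely determined by their
samples: `Bx₀ = x₀`, `Bx₁ = x₁` and `Dx₀ = Dx₁` imply `x₀ = x₁`. -/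
theorem bandlimited_unique_of_samples {N : ℕ}
    (B D : Matrix (Fin N) (Fin N) ℂ)
    (hBidem : B * B = B) (hBherm : Bᴴ = B)
    (hDidem : D * D = D) (hDherm : Dᴴ = D)
    (h : ‖(1 - D) * B‖ < 1) :
    ∀ x₀ x₁ : Fin N → ℂ, B *ᵥ x₀ = x₀ → B *ᵥ x₁ = x₁ → D *ᵥ x₀ = D *ᵥ x₁ →
      x₀ = x₁ :=
  bandlimited_unique_of_samples_general B D h
end

section
/- Let U_F be an N×k complex matrix with orthonormal columns (U_F^H U_F = I_k) and D a diagonal 0/1 matrix. Then ‖D̄ U_F‖ < 1 (with D̄ = I − D) if and only if the k×k matrix U_F^H D U_F is positive definite (equivalently, has full rank k). -/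
/-!
With `B = (1 - D) U`, the identities `(1 - D)ᴴ (1 - D) = 1 - D` and `Uᴴ U = 1` give
`Bᴴ B = 1 - Uᴴ D U`. By the C⋆-identity `‖Bᴴ B‖ = ‖B‖²`, and since for a positive element `a`
of a C⋆-algebra the norm `‖a‖` is the top of its spectrum, `‖B‖ < 1` holds iff the spectrum of
`Uᴴ D U = 1 - Bᴴ B` is contained in `(0, ∞)`, i.e. iff it is positive definite.
-/

open Matrix
open scoped Matrix.Norms.L2Operator ComplexOrder MatrixOrder

namespace CStarAlgebra

variable {A : Type*} [CStarAlgebra A] [PartialOrder A] [StarOrderedRing A]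

lemma norm_lt_one_iff_isStrictlyPositive_one_sub {a : A} (ha : 0 ≤ a) :
    ‖a‖ < 1 ↔ IsStrictlyPositive (1 - a) := by
  constructor
  · intro h
    have hle : a ≤ algebraMap ℝ A ‖a‖ := (norm_le_iff_le_algebraMap a (norm_nonneg a)).1 le_rfl
    refine (isStrictlyPositive_algebraMap (sub_pos.2 h)).of_le ?_
    rw [map_sub, map_one]
    exact sub_le_sub_left hle 1
  · intro h
    obtain hA | hA := subsingleton_or_nontrivial A
    · simp [Subsingleton.elim a 0]
    have hle : ‖a‖ ≤ 1 := (norm_le_one_iff_of_nonneg a).2 (sub_nonneg.1 h.nonneg)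
    refine hle.lt_of_ne fun h1 => ?_
    have hmem := norm_mem_spectrum_of_nonneg ha
    rw [h1, spectrum.mem_iff, map_one] at hmem
    exact hmem h.isUnit

end CStarAlgebra

namespace Matrix

variable {m n : Type*} [Fintype m]

lemma l2_opNorm_lt_one_iff_posDef_one_sub_conjTranspose_mul_self [Fintype n] [DecidableEq n]
    (B : Matrix m n ℂ) : ‖B‖ < 1 ↔ (1 - Bᴴ * B).PosDef := by
  rw [← isStrictlyPositive_iff_posDef,
    ← CStarAlgebra.norm_lt_one_iff_isStrictlyPositive_one_sub
      (posSemidef_conjTranspose_mul_self B).nonneg,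
    l2_opNorm_conjTranspose_mul_self, ← sq, sq_lt_one_iff₀ (norm_nonneg B)]

variable {R : Type*} [Semiring R] [StarRing R]

lemma isStarProjection_diagonal [DecidableEq m] {d : m → R}
    (hd : ∀ i, IsStarProjection (d i)) : IsStarProjection (diagonal d) := by
  rw [isStarProjection_iff', diagonal_mul_diagonal, star_eq_conjTranspose, diagonal_conjTranspose]
  exact ⟨congrArg diagonal (funext fun i => (hd i).isIdempotentElem),
    congrArg diagonal (funext fun i => (hd i).isSelfAdjoint)⟩

lemma conjTranspose_mul_self_of_isStarProjection {P : Matrix m m R} (hP : IsStarProjection P)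
    (U : Matrix m n R) : (P * U)ᴴ * (P * U) = Uᴴ * P * U := by
  rw [conjTranspose_mul, ← star_eq_conjTranspose P, hP.isSelfAdjoint.star_eq, Matrix.mul_assoc,
    ← Matrix.mul_assoc P, hP.isIdempotentElem.eq, Matrix.mul_assoc]

end Matrix

/-- For `U_F ∈ ℂ^{N×k}` with orthonormal columns and `D` a diagonal
0/1 matrix, `‖(I - D) * U_F‖ < 1` iff `U_Fᴴ * D * U_F` is positive definite. -/
theorem opNorm_lt_one_iff_posDef {N k : ℕ}
    (U : Matrix (Fin N) (Fin k) ℂ) (hU : Uᴴ * U = 1)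
    (d : Fin N → ℂ) (hd : ∀ i, d i = 0 ∨ d i = 1) :
    ‖((1 : Matrix (Fin N) (Fin N) ℂ) - Matrix.diagonal d) * U‖ < 1 ↔
      (Uᴴ * Matrix.diagonal d * U).PosDef := by
  have hD : IsStarProjection (diagonal d) :=
    isStarProjection_diagonal fun i => by rcases hd i with h | h <;> simp [h]
  rw [l2_opNorm_lt_one_iff_posDef_one_sub_conjTranspose_mul_self,
    conjTranspose_mul_self_of_isStarProjection hD.one_sub, Matrix.mul_sub, Matrix.sub_mul,
    Matrix.mul_one, hU, sub_sub_cancel]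
end

section
/- Let M be Hermitian positive definite with eigenvalues in [ν, δ], 0 < ν ≤ δ, let q = ‖I − μM‖² and assume 0 < μ < 2/δ. Consider nonnegative reals satisfying E[n+1] ≤ q·E[n] + μ²c for a constant c ≥ 0. Then limsup_{n→∞} E[n] ≤ μ²c/(1−q) ≤ μc/(2ν − μδ²) whenever μ < 2ν/δ². -/
/-!
Diagonalising `M` turns `I - μM` into the diagonal matrix of the `1 - μλᵢ`, whose `L²` operator
norm is `maxᵢ |1 - μλᵢ|`; since `ν ≤ λᵢ ≤ δ`, each `(1 - μλᵢ)²` is at most `1 - 2μν + μ²δ²`, so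
`1 - q ≥ μ(2ν - μδ²) > 0`. Unrolling the recursion gives
`E n - μ²c/(1-q) ≤ qⁿ (E 0 - μ²c/(1-q))`, and the right side tends to `0`.
-/

open Matrix Filter Topology
open scoped Matrix.Norms.L2Operator ComplexOrder

theorem sq_one_sub_mul_le {μ ν δ x : ℝ} (hμ : 0 ≤ μ) (hν : 0 ≤ ν) (hνx : ν ≤ x) (hxδ : x ≤ δ) :
    (1 - μ * x) ^ 2 ≤ 1 - 2 * μ * ν + μ ^ 2 * δ ^ 2 := by
  nlinarith [mul_le_mul_of_nonneg_left hνx hμ, mul_le_mul hxδ hxδ (hν.trans hνx) (by linarith)]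

namespace Matrix.IsHermitian

variable {n 𝕜 : Type*} [RCLike 𝕜] [Fintype n] [DecidableEq n] {A : Matrix n n 𝕜}

theorem l2_opNorm_cfc_le (hA : A.IsHermitian) (f : ℝ → ℝ) {r : ℝ} (hr : 0 ≤ r)
    (hf : ∀ i, |f (hA.eigenvalues i)| ≤ r) : ‖cfc f A‖ ≤ r := by
  rw [hA.cfc_eq, IsHermitian.cfc, Unitary.conjStarAlgAut_apply, mul_assoc,
    CStarRing.norm_coe_unitary_mul, ← Unitary.coe_star, CStarRing.norm_mul_coe_unitary,
    l2_opNorm_diagonal]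
  exact (pi_norm_le_iff_of_nonneg hr).2 fun i => by simpa using hf i

theorem one_sub_smul_eq_cfc (hA : A.IsHermitian) (t : ℝ) :
    1 - (t : 𝕜) • A = cfc (fun x => 1 - t * x) A := by
  rw [cfc_sub _ _ _, cfc_const_one ℝ A, cfc_const_mul_id t A, ← RCLike.real_smul_eq_coe_smul]

theorem sq_l2_opNorm_one_sub_smul_le (hA : A.IsHermitian) {μ ν δ : ℝ} (hμ : 0 ≤ μ)
    (hν : 0 ≤ ν) (hνδ : ν ≤ δ) (hlo : ∀ i, ν ≤ hA.eigenvalues i) (hhi : ∀ i, hA.eigenvalues i ≤ δ) :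
    ‖1 - (μ : 𝕜) • A‖ ^ 2 ≤ 1 - 2 * μ * ν + μ ^ 2 * δ ^ 2 := by
  have hs : 0 ≤ 1 - 2 * μ * ν + μ ^ 2 * δ ^ 2 :=
    (sq_nonneg _).trans (sq_one_sub_mul_le hμ hν le_rfl hνδ)
  rw [← Real.le_sqrt (norm_nonneg _) hs, hA.one_sub_smul_eq_cfc]
  exact hA.l2_opNorm_cfc_le _ (Real.sqrt_nonneg _) fun i =>
    Real.abs_le_sqrt (sq_one_sub_mul_le hμ hν (hlo i) (hhi i))

end Matrix.IsHermitian

theorem sub_le_pow_mul_of_le_mul_add {E : ℕ → ℝ} {q b : ℝ} (hq0 : 0 ≤ q) (hq1 : q ≠ 1)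
    (hrec : ∀ n, E (n + 1) ≤ q * E n + b) (n : ℕ) :
    E n - b / (1 - q) ≤ q ^ n * (E 0 - b / (1 - q)) := by
  have hfix : q * (b / (1 - q)) + b = b / (1 - q) := by
    field_simp [sub_ne_zero.2 hq1.symm]; ring
  induction n with
  | zero => simp
  | succ n ih =>
    calc E (n + 1) - b / (1 - q) ≤ q * (E n - b / (1 - q)) := by linarith [hrec n]
      _ ≤ q * (q ^ n * (E 0 - b / (1 - q))) := mul_le_mul_of_nonneg_left ih hq0
      _ = q ^ (n + 1) * (E 0 - b / (1 - q)) := by ring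

theorem limsup_le_div_one_sub_of_le_mul_add {E : ℕ → ℝ} {q b : ℝ}
    (hE : IsBoundedUnder (· ≥ ·) atTop E) (hq0 : 0 ≤ q) (hq1 : q < 1)
    (hrec : ∀ n, E (n + 1) ≤ q * E n + b) :
    limsup E atTop ≤ b / (1 - q) := by
  set B := b / (1 - q)
  have hlim : Tendsto (fun n => B + q ^ n * (E 0 - B)) atTop (𝓝 B) := by
    simpa using tendsto_const_nhds.add
      ((tendsto_pow_atTop_nhds_zero_of_lt_one hq0 hq1).mul_const (E 0 - B))
  calc limsup E atTop ≤ limsup (fun n => B + q ^ n * (E 0 - B)) atTop :=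
        limsup_le_limsup (Eventually.of_forall fun n => by
          linarith [sub_le_pow_mul_of_le_mul_add hq0 hq1.ne hrec n]) hE.isCoboundedUnder_le
          hlim.isBoundedUnder_le
    _ = B := hlim.limsup_eq

/-- With `M` Hermitian positive definite with smallest/largest eigenvalue
`ν`/`δ`, `q = ‖I - μM‖²`, and a nonnegative sequence with `E[n+1] ≤ q E[n] + μ²c`,
for `0 < μ < 2ν/δ²` one has `limsup E ≤ μ²c/(1-q) ≤ μc/(2ν - μδ²)`. -/
theorem lms_mse_limsup_bound {k : ℕ}
    (M : Matrix (Fin k) (Fin k) ℂ) (hM : M.PosDef)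
    (ν δ : ℝ)
    (hν : IsLeast (Set.range hM.1.eigenvalues) ν)
    (hδ : IsGreatest (Set.range hM.1.eigenvalues) δ)
    (hν0 : 0 < ν)
    (μ c : ℝ) (hc : 0 ≤ c) (hμ0 : 0 < μ) (hμ : μ < 2 * ν / δ ^ 2)
    (q : ℝ) (hq : q = ‖(1 : Matrix (Fin k) (Fin k) ℂ) - (μ : ℂ) • M‖ ^ 2)
    (E : ℕ → ℝ) (hE0 : ∀ n, 0 ≤ E n)
    (hrec : ∀ n, E (n + 1) ≤ q * E n + μ ^ 2 * c) :
    Filter.limsup E Filter.atTop ≤ μ ^ 2 * c / (1 - q) ∧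
      μ ^ 2 * c / (1 - q) ≤ μ * c / (2 * ν - μ * δ ^ 2) := by
  have hνδ : ν ≤ δ := hδ.2 hν.1
  have hgap : 0 < 2 * ν - μ * δ ^ 2 := by
    rw [lt_div_iff₀ (pow_pos (hν0.trans_le hνδ) 2)] at hμ
    linarith
  have hq_le : q ≤ 1 - μ * (2 * ν - μ * δ ^ 2) := by
    rw [hq]
    exact (hM.1.sq_l2_opNorm_one_sub_smul_le hμ0.le hν0.le hνδ
      (fun i => hν.2 ⟨i, rfl⟩) (fun i => hδ.2 ⟨i, rfl⟩)).trans_eq (by ring)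
  have hq1 : q < 1 := by linarith [mul_pos hμ0 hgap]
  refine ⟨limsup_le_div_one_sub_of_le_mul_add
    (isBoundedUnder_of_eventually_ge (Eventually.of_forall hE0)) (hq ▸ sq_nonneg _) hq1 hrec, ?_⟩
  calc μ ^ 2 * c / (1 - q) ≤ μ ^ 2 * c / (μ * (2 * ν - μ * δ ^ 2)) :=
        div_le_div_of_nonneg_left (by positivity) (by positivity) (by linarith)
    _ = μ * c / (2 * ν - μ * δ ^ 2) := by field_simp
end
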